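/- arXiv:2501.07307 — 7 statements merged into one kernel-verified Lean document; each statement's English description precedes it below -/
import Mathlib

section
/- Let 1 < p < 2 and k ≥ 1. For every ξ ∈ ℝ^k and every real t > 0 one has |V(tξ)| ≤ max{t, t^{p/2}} · |V(ξ)|. -/
/-- The auxiliary function `V(ξ) = (1 + |ξ|²)^((p-2)/4) ξ`. -/
noncomputable def V {E : Type*} [NormedAddCommGroup E] [NormedSpace ℝ E] (p : ℝ) (ξ : E) : E :=
  ((1 + ‖ξ‖ ^ 2) ^ ((p - 2) / 4)) • ξ

theorem stmt_1 (p : ℝ) (hp1 : 1 < p) (hp2 : p < 2) (k : ℕ) (hk : 1 ≤ k)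
    (ξ : EuclideanSpace ℝ (Fin k)) (t : ℝ) (ht : 0 < t) :
    ‖V p (t • ξ)‖ ≤ max t (t ^ (p / 2)) * ‖V p ξ‖ := by
  set α : ℝ := (p - 2) / 4 with hα
  have hαneg : α ≤ 0 := by
    rw [hα]; nlinarith
  set s : ℝ := ‖ξ‖ with hs
  have hs0 : 0 ≤ s := norm_nonneg ξ
  have hts : ‖t • ξ‖ = t * s := by
    rw [norm_smul, Real.norm_eq_abs, abs_of_pos ht]
  have hb1 : (0:ℝ) < 1 + s ^ 2 := by positivity
  have hb2 : (0:ℝ) < 1 + (t * s) ^ 2 := by positivity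
  have hnorm1 : ‖V p ξ‖ = (1 + s ^ 2) ^ α * s := by
    rw [V, norm_smul, Real.norm_eq_abs, abs_of_pos (Real.rpow_pos_of_pos hb1 α)]
  have hnorm2 : ‖V p (t • ξ)‖ = (1 + (t * s) ^ 2) ^ α * (t * s) := by
    rw [V, norm_smul, hts, Real.norm_eq_abs, abs_of_pos (Real.rpow_pos_of_pos hb2 α)]
  rw [hnorm1, hnorm2]
  rcases le_or_gt t 1 with ht1 | ht1
  · -- case t ≤ 1 : max = t ^ (p/2)
    have hmax : t ≤ t ^ (p / 2) := by
      nth_rewrite 1 [← Real.rpow_one t]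
      exact Real.rpow_le_rpow_of_exponent_ge ht ht1 (by linarith)
    rw [max_eq_right hmax]
    have hkey : (1 + (t * s) ^ 2) ^ α ≤ (t ^ (2:ℝ) * (1 + s ^ 2)) ^ α := by
      apply Real.rpow_le_rpow_of_nonpos (by positivity) _ hαneg
      rw [Real.rpow_two]
      nlinarith
    have hprod : (t ^ (2:ℝ) * (1 + s ^ 2)) ^ α = t ^ (2 * α) * (1 + s ^ 2) ^ α := by
      rw [Real.mul_rpow (by positivity) hb1.le, ← Real.rpow_mul ht.le]
    calc (1 + (t * s) ^ 2) ^ α * (t * s)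
        ≤ t ^ (2 * α) * (1 + s ^ 2) ^ α * (t * s) := by
          rw [← hprod]
          exact mul_le_mul_of_nonneg_right hkey (by positivity)
      _ = (t ^ (2 * α) * t) * ((1 + s ^ 2) ^ α * s) := by ring
      _ = t ^ (p / 2) * ((1 + s ^ 2) ^ α * s) := by
          nth_rewrite 2 [← Real.rpow_one t]
          rw [← Real.rpow_add ht]
          congr 1
          rw [hα]; ring
  · -- case 1 < t : max = t
    have hmax : t ^ (p / 2) ≤ t := by
      nth_rewrite 2 [← Real.rpow_one t]
      exact Real.rpow_le_rpow_of_exponent_le ht1.le (by linarith)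
    rw [max_eq_left hmax]
    have hkey : (1 + (t * s) ^ 2) ^ α ≤ (1 + s ^ 2) ^ α := by
      apply Real.rpow_le_rpow_of_nonpos hb1 _ hαneg
      have h2 : (0:ℝ) ≤ t ^ 2 - 1 := by nlinarith
      nlinarith [mul_nonneg (sq_nonneg s) h2]
    calc (1 + (t * s) ^ 2) ^ α * (t * s)
        ≤ (1 + s ^ 2) ^ α * (t * s) := by
          exact mul_le_mul_of_nonneg_right hkey (by positivity)
      _ = t * ((1 + s ^ 2) ^ α * s) := by ring
end

section
/- Let 1 < p < 2 and k ≥ 1. There exists a constant c = c(k, p) > 0 such that for all ξ, η ∈ ℝ^k one has (p/2) · |ξ − η| ≤ (1 + |ξ|² + |η|²)^{(2−p)/4} · |V(ξ) − V(η)| ≤ c(k, p) · |ξ − η|. -/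
open Real Set
open scoped RealInnerProductSpace

section InnerProductSpace

variable {E : Type*} [NormedAddCommGroup E] [InnerProductSpace ℝ E]

lemma norm_add_smul_sub_sq_le {ξ η : E} {t : ℝ} (ht : t ∈ Icc (0 : ℝ) 1) :
    ‖η + t • (ξ - η)‖ ^ 2 ≤ ‖ξ‖ ^ 2 + ‖η‖ ^ 2 := by
  have hmem := (convex_closedBall (0 : E) (max ‖ξ‖ ‖η‖)).add_smul_sub_mem
    (mem_closedBall_zero_iff.2 (le_max_right _ _)) (mem_closedBall_zero_iff.2 (le_max_left _ _)) ht
  have hle : ‖η + t • (ξ - η)‖ ≤ max ‖ξ‖ ‖η‖ := mem_closedBall_zero_iff.1 hmem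
  calc ‖η + t • (ξ - η)‖ ^ 2 ≤ max ‖ξ‖ ‖η‖ ^ 2 := by gcongr
    _ ≤ ‖ξ‖ ^ 2 + ‖η‖ ^ 2 := by
        rcases max_cases ‖ξ‖ ‖η‖ with ⟨h, -⟩ | ⟨h, -⟩ <;> rw [h] <;> nlinarith

lemma hasDerivAt_inner_V_add_smul (p : ℝ) (z u : E) (t : ℝ) :
    HasDerivAt (fun t : ℝ => ⟪V p (z + t • u), u⟫)
      ((1 + ‖z + t • u‖ ^ 2) ^ ((p - 2) / 4) * ‖u‖ ^ 2 +
        (p - 2) / 2 * (1 + ‖z + t • u‖ ^ 2) ^ ((p - 2) / 4 - 1) * ⟪z + t • u, u⟫ ^ 2) t := by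
  have hline : HasDerivAt (fun t : ℝ => z + t • u) u t := by
    simpa using ((hasDerivAt_id t).smul_const u).const_add z
  have hweight := (hline.norm_sq.const_add 1).rpow_const (p := (p - 2) / 4) (Or.inl (by positivity))
  have hinner : HasDerivAt (fun t : ℝ => ⟪z + t • u, u⟫) (‖u‖ ^ 2) t := by
    simp only [inner_add_left, real_inner_smul_left, real_inner_self_eq_norm_sq]
    simpa using ((hasDerivAt_id t).mul_const (‖u‖ ^ 2)).const_add ⟪z, u⟫
  have hfun : (fun t : ℝ => ⟪V p (z + t • u), u⟫) =
      fun t => (1 + ‖z + t • u‖ ^ 2) ^ ((p - 2) / 4) * ⟪z + t • u, u⟫ := by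
    ext s
    simp only [V, real_inner_smul_left]
  rw [hfun]
  exact (hweight.mul hinner).congr_deriv (by ring)

lemma mul_norm_sq_le_deriv_inner_V {p : ℝ} (hp2 : p ≤ 2) (w u : E) :
    p / 2 * (1 + ‖w‖ ^ 2) ^ ((p - 2) / 4) * ‖u‖ ^ 2 ≤
      (1 + ‖w‖ ^ 2) ^ ((p - 2) / 4) * ‖u‖ ^ 2 +
        (p - 2) / 2 * (1 + ‖w‖ ^ 2) ^ ((p - 2) / 4 - 1) * ⟪w, u⟫ ^ 2 := by
  set Q := 1 + ‖w‖ ^ 2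
  have hQ : 0 < Q := by positivity
  have hcs : ⟪w, u⟫ ^ 2 ≤ Q * ‖u‖ ^ 2 := by
    calc ⟪w, u⟫ ^ 2 ≤ (‖w‖ * ‖u‖) ^ 2 := by
          rw [← sq_abs]; exact pow_le_pow_left₀ (abs_nonneg _) (abs_real_inner_le_norm w u) 2
      _ ≤ Q * ‖u‖ ^ 2 := by simp only [Q]; nlinarith [sq_nonneg ‖u‖]
  rw [rpow_sub_one hQ.ne']
  have hQr : 0 ≤ Q ^ ((p - 2) / 4) / Q := by positivity
  calc p / 2 * Q ^ ((p - 2) / 4) * ‖u‖ ^ 2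
      = Q ^ ((p - 2) / 4) * ‖u‖ ^ 2 + (p - 2) / 2 * (Q ^ ((p - 2) / 4) / Q) * (Q * ‖u‖ ^ 2) := by
        field_simp; ring
    _ ≤ _ := by
        gcongr Q ^ ((p - 2) / 4) * ‖u‖ ^ 2 + ?_
        exact mul_le_mul_of_nonpos_left hcs (mul_nonpos_of_nonpos_of_nonneg (by linarith) hQr)

lemma mul_norm_sq_le_inner_V_sub_V {p : ℝ} (hp0 : 0 ≤ p) (hp2 : p ≤ 2) (ξ η : E) :
    p / 2 * (1 + ‖ξ‖ ^ 2 + ‖η‖ ^ 2) ^ ((p - 2) / 4) * ‖ξ - η‖ ^ 2 ≤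
      ⟪V p ξ - V p η, ξ - η⟫ := by
  set u := ξ - η
  have hderiv := hasDerivAt_inner_V_add_smul p η u
  have hbound : ∀ t ∈ interior (Icc (0 : ℝ) 1),
      p / 2 * (1 + ‖ξ‖ ^ 2 + ‖η‖ ^ 2) ^ ((p - 2) / 4) * ‖u‖ ^ 2 ≤
        deriv (fun t : ℝ => ⟪V p (η + t • u), u⟫) t := by
    intro t ht
    rw [(hderiv t).deriv]
    refine le_trans ?_ (mul_norm_sq_le_deriv_inner_V hp2 _ u)
    have hQ : 1 + ‖η + t • u‖ ^ 2 ≤ 1 + ‖ξ‖ ^ 2 + ‖η‖ ^ 2 := by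
      linarith [norm_add_smul_sub_sq_le (ξ := ξ) (η := η) (interior_subset ht)]
    have hpow := rpow_le_rpow_of_nonpos (by positivity) hQ (by linarith : (p - 2) / 4 ≤ 0)
    exact mul_le_mul_of_nonneg_right (mul_le_mul_of_nonneg_left hpow (by linarith))
      (sq_nonneg _)
  have hmono := (convex_Icc (0 : ℝ) 1).mul_sub_le_image_sub_of_le_deriv
    (fun t _ => (hderiv t).continuousAt.continuousWithinAt)
    (fun t _ => (hderiv t).differentiableAt.differentiableWithinAt) hbound
    0 (by simp) 1 (by simp) zero_le_one
  rw [one_smul, zero_smul, add_zero, add_sub_cancel, sub_zero, mul_one] at hmono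
  rwa [inner_sub_left]

lemma mul_norm_sub_le_rpow_mul_norm_V_sub_V {p : ℝ} (hp0 : 0 ≤ p) (hp2 : p ≤ 2) (ξ η : E) :
    p / 2 * ‖ξ - η‖ ≤ (1 + ‖ξ‖ ^ 2 + ‖η‖ ^ 2) ^ ((2 - p) / 4) * ‖V p ξ - V p η‖ := by
  rcases eq_or_ne ξ η with rfl | hne
  · simp
  set W := 1 + ‖ξ‖ ^ 2 + ‖η‖ ^ 2
  have hW : 0 < W := by positivity
  have hu : 0 < ‖ξ - η‖ := norm_pos_iff.2 (sub_ne_zero.2 hne)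
  have hmono : p / 2 * W ^ (-((2 - p) / 4)) * ‖ξ - η‖ ^ 2 ≤ ‖V p ξ - V p η‖ * ‖ξ - η‖ := by
    rw [show -((2 - p) / 4) = (p - 2) / 4 by ring]
    exact (mul_norm_sq_le_inner_V_sub_V hp0 hp2 ξ η).trans (real_inner_le_norm _ _)
  have hdiv : p / 2 * W ^ (-((2 - p) / 4)) * ‖ξ - η‖ ≤ ‖V p ξ - V p η‖ :=
    le_of_mul_le_mul_right (by linarith) hu
  calc p / 2 * ‖ξ - η‖ = W ^ ((2 - p) / 4) * (p / 2 * W ^ (-((2 - p) / 4)) * ‖ξ - η‖) := by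
        rw [rpow_neg hW.le]; field_simp
    _ ≤ W ^ ((2 - p) / 4) * ‖V p ξ - V p η‖ := by gcongr

lemma sqrt_one_add_sq_sub_sqrt_one_add_sq_le {m n : ℝ} (hnm : n ≤ m) :
    √(1 + m ^ 2) - √(1 + n ^ 2) ≤ m - n := by
  have hm : |m| ≤ √(1 + m ^ 2) := le_sqrt_of_sq_le (by rw [sq_abs]; linarith)
  have hn : |n| ≤ √(1 + n ^ 2) := le_sqrt_of_sq_le (by rw [sq_abs]; linarith)
  have hsum : m + n ≤ √(1 + m ^ 2) + √(1 + n ^ 2) :=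
    (add_le_add (le_abs_self m) (le_abs_self n)).trans (add_le_add hm hn)
  have hpos : 0 < √(1 + m ^ 2) + √(1 + n ^ 2) := by positivity
  refine le_of_mul_le_mul_right ?_ hpos
  nlinarith [sq_sqrt (by positivity : (0 : ℝ) ≤ 1 + m ^ 2),
    sq_sqrt (by positivity : (0 : ℝ) ≤ 1 + n ^ 2),
    mul_le_mul_of_nonneg_left hsum (sub_nonneg.2 hnm)]

lemma rpow_one_add_sq_sub_rpow_one_add_sq_mul_le {r m n : ℝ} (hr : -(1 / 2) ≤ r) (hn : 0 ≤ n)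
    (hnm : n ≤ m) :
    ((1 + n ^ 2) ^ r - (1 + m ^ 2) ^ r) * n ≤ (1 + m ^ 2) ^ r * (m - n) := by
  set A := 1 + m ^ 2
  set B := 1 + n ^ 2
  have hB : 0 < B := by positivity
  have hBA : B ≤ A := by simp only [A, B]; nlinarith
  have hA : 0 < A := hB.trans_le hBA
  have hsqrtB : 0 < √B := sqrt_pos.2 hB
  have hratio : (B / A) ^ r ≤ √A / √B := by
    calc (B / A) ^ r ≤ (B / A) ^ (-(1 / 2) : ℝ) :=
          rpow_le_rpow_of_exponent_ge (by positivity) ((div_le_one hA).2 hBA) hr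
      _ = √A / √B := by
          rw [rpow_neg (by positivity), ← sqrt_eq_rpow, sqrt_div' _ hA.le, inv_div]
  calc (B ^ r - A ^ r) * n = A ^ r * (((B / A) ^ r - 1) * n) := by
        rw [div_rpow hB.le hA.le]; field_simp
    _ ≤ A ^ r * ((√A / √B - 1) * n) := by gcongr
    _ = A ^ r * ((√A - √B) * (n / √B)) := by field_simp
    _ ≤ A ^ r * ((m - n) * 1) := by
        gcongr A ^ r * ?_
        refine mul_le_mul (sqrt_one_add_sq_sub_sqrt_one_add_sq_le hnm)
          ((div_le_one hsqrtB).2 (le_sqrt_of_sq_le ?_)) (by positivity) (by linarith)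
        simp only [B]; linarith
    _ = A ^ r * (m - n) := by ring

lemma norm_V_sub_V_le_of_norm_le {p : ℝ} (hp0 : 0 ≤ p) (hp2 : p ≤ 2) {ξ η : E}
    (h : ‖η‖ ≤ ‖ξ‖) :
    ‖V p ξ - V p η‖ ≤ 2 * (1 + ‖ξ‖ ^ 2) ^ ((p - 2) / 4) * ‖ξ - η‖ := by
  set r := (p - 2) / 4 with hr
  set A := 1 + ‖ξ‖ ^ 2
  set B := 1 + ‖η‖ ^ 2
  have hAB : 0 ≤ B ^ r - A ^ r :=
    sub_nonneg.2 (rpow_le_rpow_of_nonpos (by positivity) (by simp only [A, B]; gcongr)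
      (by rw [hr]; linarith))
  have hdecomp : V p ξ - V p η = A ^ r • (ξ - η) - (B ^ r - A ^ r) • η := by
    simp only [V]; module
  calc ‖V p ξ - V p η‖ ≤ A ^ r * ‖ξ - η‖ + (B ^ r - A ^ r) * ‖η‖ := by
        rw [hdecomp]
        refine (norm_sub_le _ _).trans_eq ?_
        rw [norm_smul, norm_smul, norm_of_nonneg (by positivity), norm_of_nonneg hAB]
    _ ≤ A ^ r * ‖ξ - η‖ + A ^ r * (‖ξ‖ - ‖η‖) :=
        add_le_add_right (rpow_one_add_sq_sub_rpow_one_add_sq_mul_le (by rw [hr]; linarith)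
          (norm_nonneg η) h) _
    _ ≤ A ^ r * ‖ξ - η‖ + A ^ r * ‖ξ - η‖ := by gcongr; exact norm_sub_norm_le ξ η
    _ = 2 * A ^ r * ‖ξ - η‖ := by ring

lemma rpow_mul_norm_V_sub_V_le {p : ℝ} (hp0 : 0 ≤ p) (hp2 : p ≤ 2) (ξ η : E) :
    (1 + ‖ξ‖ ^ 2 + ‖η‖ ^ 2) ^ ((2 - p) / 4) * ‖V p ξ - V p η‖ ≤ 4 * ‖ξ - η‖ := by
  wlog h : ‖η‖ ≤ ‖ξ‖ generalizing ξ η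
  · have := this η ξ (le_of_not_ge h)
    rwa [add_right_comm, norm_sub_rev, norm_sub_rev η] at this
  set s := (2 - p) / 4 with hs
  set A := 1 + ‖ξ‖ ^ 2
  have hA : 0 < A := by positivity
  have hW : (A + ‖η‖ ^ 2) ^ s ≤ 2 * A ^ s := by
    calc (A + ‖η‖ ^ 2) ^ s ≤ (2 * A) ^ s := by
          gcongr; simp only [A]; nlinarith [pow_le_pow_left₀ (norm_nonneg η) h 2]
      _ = 2 ^ s * A ^ s := mul_rpow zero_le_two hA.le
      _ ≤ 2 * A ^ s := by
          gcongr
          exact rpow_le_self_of_one_le one_le_two (by rw [hs]; linarith)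
  have hV := norm_V_sub_V_le_of_norm_le hp0 hp2 h
  rw [show (p - 2) / 4 = -s by ring, rpow_neg hA.le] at hV
  calc (A + ‖η‖ ^ 2) ^ s * ‖V p ξ - V p η‖ ≤ 2 * A ^ s * (2 * (A ^ s)⁻¹ * ‖ξ - η‖) := by
        gcongr
    _ = 4 * ‖ξ - η‖ := by field_simp; ring

end InnerProductSpace

theorem stmt_3_general (p : ℝ) (hp1 : 1 < p) (hp2 : p < 2) (k : ℕ) :
    ∃ c : ℝ, 0 < c ∧ ∀ ξ η : EuclideanSpace ℝ (Fin k),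
      p / 2 * ‖ξ - η‖ ≤ (1 + ‖ξ‖ ^ 2 + ‖η‖ ^ 2) ^ ((2 - p) / 4) * ‖V p ξ - V p η‖ ∧
        (1 + ‖ξ‖ ^ 2 + ‖η‖ ^ 2) ^ ((2 - p) / 4) * ‖V p ξ - V p η‖ ≤ c * ‖ξ - η‖ :=
  ⟨4, by norm_num, fun ξ η => ⟨mul_norm_sub_le_rpow_mul_norm_V_sub_V (by linarith) hp2.le ξ η,
    rpow_mul_norm_V_sub_V_le (by linarith) hp2.le ξ η⟩⟩

theorem stmt_3 (p : ℝ) (hp1 : 1 < p) (hp2 : p < 2) (k : ℕ) (hk : 1 ≤ k) :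
    ∃ c : ℝ, 0 < c ∧ ∀ ξ η : EuclideanSpace ℝ (Fin k),
      p / 2 * ‖ξ - η‖ ≤ (1 + ‖ξ‖ ^ 2 + ‖η‖ ^ 2) ^ ((2 - p) / 4) * ‖V p ξ - V p η‖ ∧
        (1 + ‖ξ‖ ^ 2 + ‖η‖ ^ 2) ^ ((2 - p) / 4) * ‖V p ξ - V p η‖ ≤ c * ‖ξ - η‖ :=
  stmt_3_general p hp1 hp2 k
end

section
/- Let 1 < p < 2 and k ≥ 1. There exists a constant c = c(k, p) > 0 such that for all ξ, η ∈ ℝ^k one has |V(ξ) − V(η)| ≤ c(k, p) · |V(ξ − η)|. -/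
/-!
Assume `‖η‖ ≤ ‖ξ‖`. If `‖ξ‖ < 2 ‖ξ - η‖`, bound `V ξ` and `V η` separately: `t ↦ (1 + t²)^((p-2)/4) t`
is increasing and grows at most linearly, so both are `O(|V (ξ - η)|)`. Otherwise every point of
the ball of radius `‖ξ - η‖` around `ξ` has norm at least `‖ξ - η‖`; since
`‖DV(ζ)‖ ≲ (1 + |ζ|²)^((p-2)/4)` and this weight decreases in `|ζ|`, the mean value theorem on that
ball gives `|V ξ - V η| ≲ (1 + |ξ - η|²)^((p-2)/4) |ξ - η| = |V (ξ - η)|`.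
-/

open Metric

lemma mul_one_add_sq_rpow_le {β s t : ℝ} (hβ : 0 ≤ β) (hβ' : 2 * β ≤ 1) (hs : 0 ≤ s)
    (hst : s ≤ t) : s * (1 + t ^ 2) ^ β ≤ t * (1 + s ^ 2) ^ β := by
  have ht : 0 ≤ t := hs.trans hst
  -- Splitting `u = u ^ (1 - 2β) * (u²)^β` reduces the claim to `s² (1 + t²) ≤ t² (1 + s²)`.
  have split : ∀ u : ℝ, 0 ≤ u → ∀ v : ℝ,
      u * (1 + v ^ 2) ^ β = u ^ (1 - 2 * β) * (u ^ 2 * (1 + v ^ 2)) ^ β := by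
    intro u hu v
    rw [Real.mul_rpow (by positivity) (by positivity), ← mul_assoc, ← Real.rpow_natCast_mul hu,
      ← Real.rpow_add' hu (by norm_num)]
    norm_num
  rw [split s hs, split t ht]
  exact mul_le_mul (Real.rpow_le_rpow hs hst (by linarith))
    (Real.rpow_le_rpow (by positivity) (by nlinarith) hβ) (by positivity) (by positivity)

section NormedSpace

variable {E : Type*} [NormedAddCommGroup E] [NormedSpace ℝ E] {p : ℝ}

lemma norm_V (p : ℝ) (x : E) : ‖V p x‖ = (1 + ‖x‖ ^ 2) ^ ((p - 2) / 4) * ‖x‖ := by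
  rw [V, norm_smul, Real.norm_of_nonneg (by positivity)]

lemma norm_V_le_norm_V (hp0 : 0 ≤ p) (hp2 : p ≤ 2) {x y : E} (h : ‖x‖ ≤ ‖y‖) :
    ‖V p x‖ ≤ ‖V p y‖ := by
  have key := mul_one_add_sq_rpow_le (β := (2 - p) / 4) (by linarith) (by linarith)
    (norm_nonneg x) h
  rw [norm_V, norm_V, show (p - 2) / 4 = -((2 - p) / 4) by ring,
    Real.rpow_neg (by positivity), Real.rpow_neg (by positivity), inv_mul_eq_div,
    inv_mul_eq_div, div_le_div_iff₀ (by positivity) (by positivity)]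
  exact key

lemma norm_V_smul_le (hp2 : p ≤ 2) {a : ℝ} (ha : 1 ≤ a) (x : E) :
    ‖V p (a • x)‖ ≤ a * ‖V p x‖ := by
  have hweight : (1 + (a * ‖x‖) ^ 2) ^ ((p - 2) / 4) ≤ (1 + ‖x‖ ^ 2) ^ ((p - 2) / 4) := by
    apply Real.rpow_le_rpow_of_nonpos (by positivity) _ (by linarith)
    nlinarith [mul_nonneg (sq_nonneg ‖x‖) (by nlinarith : (0 : ℝ) ≤ a ^ 2 - 1)]
  rw [norm_V, norm_V, norm_smul, Real.norm_of_nonneg (by linarith)]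
  calc (1 + (a * ‖x‖) ^ 2) ^ ((p - 2) / 4) * (a * ‖x‖)
      ≤ (1 + ‖x‖ ^ 2) ^ ((p - 2) / 4) * (a * ‖x‖) := by gcongr
    _ = a * ((1 + ‖x‖ ^ 2) ^ ((p - 2) / 4) * ‖x‖) := by ring

end NormedSpace

section InnerProductSpace

variable {E : Type*} [NormedAddCommGroup E] [InnerProductSpace ℝ E] {p : ℝ}

lemma hasFDerivAt_V (p : ℝ) (ζ : E) :
    HasFDerivAt (V p)
      ((1 + ‖ζ‖ ^ 2) ^ ((p - 2) / 4) • ContinuousLinearMap.id ℝ E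
        + (((p - 2) / 4 * (1 + ‖ζ‖ ^ 2) ^ ((p - 2) / 4 - 1)) • (2 • innerSL ℝ ζ)).smulRight ζ)
      ζ := by
  have hweight : HasFDerivAt (fun x : E => 1 + ‖x‖ ^ 2) (2 • innerSL ℝ ζ) ζ := by
    simpa using ((hasFDerivAt_id ζ).norm_sq).const_add (1 : ℝ)
  rw [show V p = (fun x : E => (1 + ‖x‖ ^ 2) ^ ((p - 2) / 4)) • id from rfl]
  simpa using (hweight.rpow_const (p := (p - 2) / 4) (Or.inl (by positivity))).smul
    (hasFDerivAt_id ζ)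

lemma norm_fderiv_V_le (p : ℝ) (ζ : E) :
    ‖fderiv ℝ (V p) ζ‖ ≤ (1 + |p - 2| / 2) * (1 + ‖ζ‖ ^ 2) ^ ((p - 2) / 4) := by
  set w := (1 + ‖ζ‖ ^ 2) ^ ((p - 2) / 4)
  set w₁ := (1 + ‖ζ‖ ^ 2) ^ ((p - 2) / 4 - 1)
  have hw₁ : w₁ * (1 + ‖ζ‖ ^ 2) = w := by
    rw [← Real.rpow_add_one (by positivity), sub_add_cancel]
  rw [(hasFDerivAt_V p ζ).fderiv]
  refine ContinuousLinearMap.opNorm_le_bound _ (by positivity) fun h => ?_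
  simp only [add_apply, smul_apply, ContinuousLinearMap.smulRight_apply,
    ContinuousLinearMap.coe_id', id_eq, innerSL_apply_apply, smul_eq_mul, nsmul_eq_mul, Nat.cast_ofNat]
  have hinner : |inner ℝ ζ h| * ‖ζ‖ ≤ (1 + ‖ζ‖ ^ 2) * ‖h‖ := by
    nlinarith [abs_real_inner_le_norm ζ h, norm_nonneg ζ, norm_nonneg h]
  calc _ ≤ ‖w • h‖ + ‖((p - 2) / 4 * w₁ * (2 * inner ℝ ζ h)) • ζ‖ := norm_add_le _ _
    _ = w * ‖h‖ + |p - 2| / 2 * w₁ * (|inner ℝ ζ h| * ‖ζ‖) := by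
      rw [norm_smul, norm_smul, Real.norm_of_nonneg (by positivity), Real.norm_eq_abs,
        abs_mul, abs_mul, abs_mul, abs_div, abs_of_pos (by positivity : (0 : ℝ) < w₁), abs_two,
        abs_of_pos (by norm_num : (0 : ℝ) < 4)]
      ring
    _ ≤ w * ‖h‖ + |p - 2| / 2 * w₁ * ((1 + ‖ζ‖ ^ 2) * ‖h‖) := by gcongr
    _ = (1 + |p - 2| / 2) * w * ‖h‖ := by rw [← hw₁]; ring

lemma norm_V_sub_le_of_two_mul_norm_sub_le (hp2 : p ≤ 2) {ξ η : E} (h : 2 * ‖ξ - η‖ ≤ ‖ξ‖) :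
    ‖V p ξ - V p η‖ ≤ (1 + |p - 2| / 2) * ‖V p (ξ - η)‖ := by
  have hball : ∀ z ∈ closedBall ξ ‖ξ - η‖, ‖ξ - η‖ ≤ ‖z‖ := by
    intro z hz
    have := norm_sub_norm_le ξ z
    rw [mem_closedBall_iff_norm'] at hz
    linarith
  rw [norm_V, ← mul_assoc]
  apply (convex_closedBall ξ ‖ξ - η‖).norm_image_sub_le_of_norm_fderiv_le (𝕜 := ℝ)
  · exact fun z _ => (hasFDerivAt_V p z).differentiableAt
  · intro z hz
    refine (norm_fderiv_V_le p z).trans (mul_le_mul_of_nonneg_left ?_ (by positivity))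
    apply Real.rpow_le_rpow_of_nonpos (by positivity) _ (by linarith)
    nlinarith [hball z hz, norm_nonneg (ξ - η)]
  · simp [dist_eq_norm_sub, norm_sub_rev]
  · simp

lemma norm_V_sub_le_of_norm_le (hp0 : 0 ≤ p) (hp2 : p ≤ 2) {ξ η : E} (h : ‖η‖ ≤ ‖ξ‖) :
    ‖V p ξ - V p η‖ ≤ 4 * ‖V p (ξ - η)‖ := by
  rcases le_or_gt (2 * ‖ξ - η‖) ‖ξ‖ with hfar | hnear
  · refine (norm_V_sub_le_of_two_mul_norm_sub_le hp2 hfar).trans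
      (mul_le_mul_of_nonneg_right ?_ (norm_nonneg _))
    rw [abs_of_nonpos (by linarith)]
    linarith
  · have hξ : ‖ξ‖ ≤ ‖(2 : ℝ) • (ξ - η)‖ := by
      rw [norm_smul, Real.norm_two]
      exact hnear.le
    calc ‖V p ξ - V p η‖ ≤ ‖V p ξ‖ + ‖V p η‖ := norm_sub_le _ _
      _ ≤ 2 * ‖V p ξ‖ := by linarith [norm_V_le_norm_V hp0 hp2 h]
      _ ≤ 2 * ‖V p ((2 : ℝ) • (ξ - η))‖ := by gcongr; exact norm_V_le_norm_V hp0 hp2 hξ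
      _ ≤ 2 * (2 * ‖V p (ξ - η)‖) := by gcongr; exact norm_V_smul_le hp2 one_le_two _
      _ = 4 * ‖V p (ξ - η)‖ := by ring

lemma norm_V_sub_le (hp0 : 0 ≤ p) (hp2 : p ≤ 2) (ξ η : E) :
    ‖V p ξ - V p η‖ ≤ 4 * ‖V p (ξ - η)‖ := by
  rcases le_total ‖η‖ ‖ξ‖ with h | h
  · exact norm_V_sub_le_of_norm_le hp0 hp2 h
  · have hsymm : ‖V p (ξ - η)‖ = ‖V p (η - ξ)‖ := by rw [norm_V, norm_V, norm_sub_rev]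
    rw [norm_sub_rev, hsymm]
    exact norm_V_sub_le_of_norm_le hp0 hp2 h

end InnerProductSpace

theorem stmt_4_general (p : ℝ) (hp1 : 1 < p) (hp2 : p < 2) (k : ℕ) :
    ∃ c : ℝ, 0 < c ∧ ∀ ξ η : EuclideanSpace ℝ (Fin k),
      ‖V p ξ - V p η‖ ≤ c * ‖V p (ξ - η)‖ :=
  ⟨4, by norm_num, norm_V_sub_le (by linarith) hp2.le⟩

theorem stmt_4 (p : ℝ) (hp1 : 1 < p) (hp2 : p < 2) (k : ℕ) (hk : 1 ≤ k) :
    ∃ c : ℝ, 0 < c ∧ ∀ ξ η : EuclideanSpace ℝ (Fin k),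
      ‖V p ξ - V p η‖ ≤ c * ‖V p (ξ - η)‖ :=
  stmt_4_general p hp1 hp2 k
end

section
/- Let 0 < ρ < R and let ψ : [ρ, R] → ℝ be a bounded nonnegative function. Assume that there are constants θ ∈ [0, 1), α > β > 0 and A, B, C ≥ 0 such that for all ρ ≤ s < t ≤ R one has ψ(s) ≤ θ ψ(t) + A + B/(t − s)^α + C/(t − s)^β. Then there exists a constant c = c(θ, α) > 0 (independent of ρ, R, ψ, A, B, C, β) such that ψ(ρ) ≤ c · ( A + B/(R − ρ)^α + C/(R − ρ)^β ). -/
private lemma pow_rpow_comm (x : ℝ) (hx : 0 ≤ x) (n : ℕ) (y : ℝ) :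
    (x ^ n) ^ y = (x ^ y) ^ n := by
  rw [← Real.rpow_natCast x n, ← Real.rpow_mul hx, mul_comm, Real.rpow_mul hx, Real.rpow_natCast]

theorem stmt_6 (θ α : ℝ) (hθ0 : 0 ≤ θ) (hθ1 : θ < 1) (hα : 0 < α) :
    ∃ c : ℝ, 0 < c ∧
      ∀ (ρ R : ℝ) (ψ : ℝ → ℝ) (β A B C : ℝ),
        0 < ρ → ρ < R →
        (∃ K : ℝ, ∀ x ∈ Set.Icc ρ R, ψ x ≤ K) →
        (∀ x ∈ Set.Icc ρ R, 0 ≤ ψ x) →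
        0 < β → β < α →
        0 ≤ A → 0 ≤ B → 0 ≤ C →
        (∀ s t : ℝ, ρ ≤ s → s < t → t ≤ R →
          ψ s ≤ θ * ψ t + A + B / (t - s) ^ α + C / (t - s) ^ β) →
        ψ ρ ≤ c * (A + B / (R - ρ) ^ α + C / (R - ρ) ^ β) := by
  have hb0 : (0:ℝ) < (θ+1)/2 := by linarith
  have hb1 : (θ+1)/2 < 1 := by linarith
  set l : ℝ := ((θ+1)/2) ^ (1/α) with hldef
  have hl0 : 0 < l := Real.rpow_pos_of_pos hb0 _
  have hl1 : l < 1 := Real.rpow_lt_one hb0.le hb1 (by positivity)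
  have hlα : l ^ α = (θ+1)/2 := by
    rw [hldef, ← Real.rpow_mul hb0.le, one_div, inv_mul_cancel₀ hα.ne', Real.rpow_one]
  set μ : ℝ := θ / ((θ+1)/2) with hμdef
  have hμ0 : 0 ≤ μ := div_nonneg hθ0 hb0.le
  have hμ1 : μ < 1 := (div_lt_one hb0).2 (by linarith)
  have hθμ : θ ≤ μ := by
    rw [hμdef, le_div_iff₀ hb0]; nlinarith
  have h1l0 : 0 < 1 - l := by linarith
  have h1l1 : 1 - l < 1 := by linarith
  set d : ℝ := (1 - l) ^ (-α) with hddef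
  have hd0 : 0 < d := Real.rpow_pos_of_pos h1l0 _
  have hd1 : 1 ≤ d := Real.one_le_rpow_of_pos_of_le_one_of_nonpos h1l0 h1l1.le (by linarith)
  have h1μ : 0 < 1 - μ := by linarith
  refine ⟨d / (1 - μ), by positivity, ?_⟩
  intro ρ R ψ β A B C hρ hρR hKex hψ0 hβ hβα hA hB hC hiter
  obtain ⟨K, hK⟩ := hKex
  have hRρ : 0 < R - ρ := by linarith
  set M : ℝ := max K 0 with hMdef
  -- the sequence of radii
  set t : ℕ → ℝ := fun i => R - l ^ i * (R - ρ) with htdef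
  have ht0 : t 0 = ρ := by simp [htdef]
  have hlpow_pos : ∀ i : ℕ, 0 < l ^ i := fun i => pow_pos hl0 i
  have hlpow_le1 : ∀ i : ℕ, l ^ i ≤ 1 := fun i => pow_le_one₀ hl0.le hl1.le
  have htmem : ∀ i, t i ∈ Set.Icc ρ R := by
    intro i
    constructor
    · have := hlpow_le1 i; simp only [htdef]; nlinarith
    · have := hlpow_pos i; simp only [htdef]; nlinarith
  set δ : ℕ → ℝ := fun i => l ^ i * ((1 - l) * (R - ρ)) with hδdef
  have hδpos : ∀ i, 0 < δ i := fun i => by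
    have := hlpow_pos i; simp only [hδdef]; positivity
  have htdiff : ∀ i, t (i+1) - t i = δ i := by
    intro i; simp only [htdef, hδdef, pow_succ]; ring
  have htlt : ∀ i, t i < t (i+1) := by
    intro i; have := hδpos i; have h := htdiff i; linarith
  -- constants
  set X : ℝ := (1 - l) * (R - ρ) with hXdef
  have hX0 : 0 < X := by positivity
  set D : ℝ := A + B / X ^ α + C / X ^ β with hDdef
  have hXα : 0 < X ^ α := Real.rpow_pos_of_pos hX0 _
  have hXβ : 0 < X ^ β := Real.rpow_pos_of_pos hX0 _
  have hD0 : 0 ≤ D := by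
    have : 0 ≤ B / X ^ α := by positivity
    have : 0 ≤ C / X ^ β := by positivity
    simp only [hDdef]; positivity
  -- per-step bound
  have hstep : ∀ i : ℕ, θ ^ i * (A + B / δ i ^ α + C / δ i ^ β) ≤ μ ^ i * D := by
    intro i
    have hδα : (δ i) ^ α = (l ^ α) ^ i * X ^ α := by
      rw [hδdef]
      rw [Real.mul_rpow (by positivity) hX0.le, pow_rpow_comm l hl0.le]
    have hδβ : (δ i) ^ β = (l ^ β) ^ i * X ^ β := by
      rw [hδdef]
      rw [Real.mul_rpow (by positivity) hX0.le, pow_rpow_comm l hl0.le]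
    have hlα_pos : 0 < l ^ α := Real.rpow_pos_of_pos hl0 _
    have hlβ_pos : 0 < l ^ β := Real.rpow_pos_of_pos hl0 _
    have hlαβ : l ^ α ≤ l ^ β := Real.rpow_le_rpow_of_exponent_ge hl0 hl1.le hβα.le
    have hμeq : μ = θ / l ^ α := by rw [hlα]
    have hθpow : 0 ≤ θ ^ i := pow_nonneg hθ0 i
    have hμpow : 0 ≤ μ ^ i := pow_nonneg hμ0 i
    -- A term
    have hAterm : θ ^ i * A ≤ μ ^ i * A :=
      mul_le_mul_of_nonneg_right (pow_le_pow_left₀ hθ0 hθμ i) hA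
    -- B term
    have hBterm : θ ^ i * (B / δ i ^ α) = μ ^ i * (B / X ^ α) := by
      rw [hδα, hμeq, div_pow]
      field_simp
    -- C term
    have hCterm : θ ^ i * (C / δ i ^ β) ≤ μ ^ i * (C / X ^ β) := by
      rw [hδβ, hμeq, div_pow]
      have hpowle : (l ^ α) ^ i ≤ (l ^ β) ^ i := pow_le_pow_left₀ hlα_pos.le hlαβ i
      have h1 : θ ^ i / (l ^ β) ^ i ≤ θ ^ i / (l ^ α) ^ i :=
        div_le_div_of_nonneg_left hθpow (pow_pos hlα_pos i) hpowle
      have hC' : 0 ≤ C / X ^ β := by positivity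
      calc θ ^ i * (C / ((l ^ β) ^ i * X ^ β))
          = (θ ^ i / (l ^ β) ^ i) * (C / X ^ β) := by
            field_simp
        _ ≤ (θ ^ i / (l ^ α) ^ i) * (C / X ^ β) :=
            mul_le_mul_of_nonneg_right h1 hC'
    calc θ ^ i * (A + B / δ i ^ α + C / δ i ^ β)
        = θ ^ i * A + θ ^ i * (B / δ i ^ α) + θ ^ i * (C / δ i ^ β) := by ring
      _ ≤ μ ^ i * A + μ ^ i * (B / X ^ α) + μ ^ i * (C / X ^ β) := by
          rw [hBterm]; exact add_le_add (add_le_add hAterm le_rfl) hCterm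
      _ = μ ^ i * D := by rw [hDdef]; ring
  -- main induction
  have main : ∀ k : ℕ, ψ ρ ≤ θ ^ k * ψ (t k) + (∑ i ∈ Finset.range k, μ ^ i) * D := by
    intro k
    induction k with
    | zero => rw [ht0]; simp
    | succ k ih =>
      have hit : ψ (t k) ≤ θ * ψ (t (k+1)) + A + B / δ k ^ α + C / δ k ^ β := by
        have := hiter (t k) (t (k+1)) (htmem k).1 (htlt k) (htmem (k+1)).2
        rwa [htdiff k] at this
      have hθpow : 0 ≤ θ ^ k := pow_nonneg hθ0 k
      have h2 : θ ^ k * ψ (t k) ≤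
          θ ^ (k+1) * ψ (t (k+1)) + θ ^ k * (A + B / δ k ^ α + C / δ k ^ β) := by
        have := mul_le_mul_of_nonneg_left hit hθpow
        calc θ ^ k * ψ (t k) ≤ θ ^ k * (θ * ψ (t (k+1)) + A + B / δ k ^ α + C / δ k ^ β) := this
          _ = θ ^ (k+1) * ψ (t (k+1)) + θ ^ k * (A + B / δ k ^ α + C / δ k ^ β) := by ring
      have h3 := hstep k
      calc ψ ρ ≤ θ ^ k * ψ (t k) + (∑ i ∈ Finset.range k, μ ^ i) * D := ih
        _ ≤ θ ^ (k+1) * ψ (t (k+1)) + θ ^ k * (A + B / δ k ^ α + C / δ k ^ β)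
            + (∑ i ∈ Finset.range k, μ ^ i) * D := by linarith
        _ ≤ θ ^ (k+1) * ψ (t (k+1)) + μ ^ k * D + (∑ i ∈ Finset.range k, μ ^ i) * D := by
            linarith
        _ = θ ^ (k+1) * ψ (t (k+1)) + (∑ i ∈ Finset.range (k+1), μ ^ i) * D := by
            rw [Finset.sum_range_succ]; ring
  -- pass to the bound with M and geometric series
  have hbound : ∀ k : ℕ, ψ ρ ≤ θ ^ k * M + (1 - μ)⁻¹ * D := by
    intro k
    have hψtk : ψ (t k) ≤ M := le_trans (hK _ (htmem k)) (le_max_left _ _)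
    have hθpow : 0 ≤ θ ^ k := pow_nonneg hθ0 k
    have hsum : (∑ i ∈ Finset.range k, μ ^ i) ≤ (1 - μ)⁻¹ := by
      have := Summable.sum_le_tsum (Finset.range k)
        (fun i _ => pow_nonneg hμ0 i) (summable_geometric_of_lt_one hμ0 hμ1)
      rwa [tsum_geometric_of_lt_one hμ0 hμ1] at this
    calc ψ ρ ≤ θ ^ k * ψ (t k) + (∑ i ∈ Finset.range k, μ ^ i) * D := main k
      _ ≤ θ ^ k * M + (1 - μ)⁻¹ * D := by
          have h1 : θ ^ k * ψ (t k) ≤ θ ^ k * M := mul_le_mul_of_nonneg_left hψtk hθpow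
          have h2 : (∑ i ∈ Finset.range k, μ ^ i) * D ≤ (1 - μ)⁻¹ * D :=
            mul_le_mul_of_nonneg_right hsum hD0
          linarith
  -- take the limit k → ∞
  have hlim : ψ ρ ≤ (1 - μ)⁻¹ * D := by
    have htend : Filter.Tendsto (fun k : ℕ => θ ^ k * M + (1 - μ)⁻¹ * D)
        Filter.atTop (nhds ((1 - μ)⁻¹ * D)) := by
      have h0 := (tendsto_pow_atTop_nhds_zero_of_lt_one hθ0 hθ1).mul_const M
      have := h0.add_const ((1 - μ)⁻¹ * D)
      simpa using this
    exact ge_of_tendsto' htend hbound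
  -- compare D with the final expression
  have hRα : 0 < (R - ρ) ^ α := Real.rpow_pos_of_pos hRρ _
  have hRβ : 0 < (R - ρ) ^ β := Real.rpow_pos_of_pos hRρ _
  have h1lα : 0 < (1 - l) ^ α := Real.rpow_pos_of_pos h1l0 _
  have h1lβ : 0 < (1 - l) ^ β := Real.rpow_pos_of_pos h1l0 _
  have hDle : D ≤ d * (A + B / (R - ρ) ^ α + C / (R - ρ) ^ β) := by
    have hXαeq : X ^ α = (1 - l) ^ α * (R - ρ) ^ α := Real.mul_rpow h1l0.le hRρ.le
    have hXβeq : X ^ β = (1 - l) ^ β * (R - ρ) ^ β := Real.mul_rpow h1l0.le hRρ.le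
    have hdinv : d = ((1 - l) ^ α)⁻¹ := by
      rw [hddef, Real.rpow_neg h1l0.le]
    have hA' : A ≤ d * A := le_mul_of_one_le_left hA hd1
    have hB' : B / X ^ α = d * (B / (R - ρ) ^ α) := by
      rw [hXαeq, hdinv]; field_simp
    have hC' : C / X ^ β ≤ d * (C / (R - ρ) ^ β) := by
      rw [hXβeq]
      have hle : ((1 - l) ^ β)⁻¹ ≤ d := by
        rw [hddef, ← Real.rpow_neg h1l0.le]
        exact Real.rpow_le_rpow_of_exponent_ge h1l0 h1l1.le (by linarith)
      calc C / ((1 - l) ^ β * (R - ρ) ^ β)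
          = ((1 - l) ^ β)⁻¹ * (C / (R - ρ) ^ β) := by field_simp
        _ ≤ d * (C / (R - ρ) ^ β) := by
            apply mul_le_mul_of_nonneg_right hle (by positivity)
    calc D = A + B / X ^ α + C / X ^ β := hDdef ▸ rfl
      _ ≤ d * A + d * (B / (R - ρ) ^ α) + d * (C / (R - ρ) ^ β) := by
          rw [hB']; exact add_le_add (add_le_add hA' le_rfl) hC'
      _ = d * (A + B / (R - ρ) ^ α + C / (R - ρ) ^ β) := by ring
  calc ψ ρ ≤ (1 - μ)⁻¹ * D := hlim
    _ ≤ (1 - μ)⁻¹ * (d * (A + B / (R - ρ) ^ α + C / (R - ρ) ^ β)) :=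
        mul_le_mul_of_nonneg_left hDle (by positivity)
    _ = d / (1 - μ) * (A + B / (R - ρ) ^ α + C / (R - ρ) ^ β) := by
        ring
end

section
/- Let 1 < p < ∞, k ≥ 1, L > 0, and let f : ℝ^k → ℝ be a C² function satisfying |f(ξ)| ≤ L(1 + |ξ|^p) and |Df(ξ)| ≤ L(1 + |ξ|²)^{(p−1)/2} for all ξ ∈ ℝ^k. For Q ∈ ℝ^k and λ > 0 define f_{Q,λ}(ξ) := ( f(Q + λξ) − f(Q) − Df(Q)·(λξ) ) / λ². Then for every M > 0 there exists a constant c = c(p, L, M) > 0 such that for every Q ∈ ℝ^k with |Q| ≤ M, every λ > 0 and every ξ ∈ ℝ^k one has |f_{Q,λ}(ξ)| ≤ c (1 + |λξ|²)^{(p−2)/2} |ξ|² and |D f_{Q,λ}(ξ)| ≤ c (1 + |λξ|²)^{(p−2)/2} |ξ|. -/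
/-!
For `‖h‖ ≤ 1` both quantities are controlled by the Lipschitz constant of `Df` on the ball of
radius `M + 1`, and the weight `(1 + ‖h‖²)^((p-2)/2)` is bounded below there. For `‖h‖ ≥ 1` the
growth hypotheses bound each term separately by multiples of `(1 + ‖h‖²)^(p/2)` and
`(1 + ‖h‖²)^((p-1)/2)`, which are at most twice the weight times `‖h‖²` and `‖h‖` respectively.
The statement for `f_{Q,λ}` is the case `h = λξ`, divided by `λ²` and `λ`.
-/

open Metric

lemma min_one_two_rpow_le_rpow {a y : ℝ} (hy₁ : 1 ≤ y) (hy₂ : y ≤ 2) : min 1 (2 ^ a) ≤ y ^ a := by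
  rcases le_total 0 a with ha | ha
  · exact (min_le_left _ _).trans (Real.one_le_rpow hy₁ ha)
  · exact (min_le_right _ _).trans (Real.rpow_le_rpow_of_nonpos (by linarith) hy₂ ha)

lemma one_add_rpow_le_two_mul_one_add_sq_rpow {x p : ℝ} (hx : 0 ≤ x) (hp : 0 ≤ p) :
    1 + x ^ p ≤ 2 * (1 + x ^ 2) ^ (p / 2) := by
  have h₁ : 1 ≤ (1 + x ^ 2) ^ (p / 2) := Real.one_le_rpow (by nlinarith) (by linarith)
  have h₂ : x ^ p ≤ (1 + x ^ 2) ^ (p / 2) :=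
    calc x ^ p = (x ^ 2) ^ (p / 2) := by
          rw [← Real.rpow_natCast, ← Real.rpow_mul hx]; congr 1; ring
      _ ≤ (1 + x ^ 2) ^ (p / 2) := by gcongr; linarith
  linarith

lemma one_add_sq_rpow_add_one_le {a t : ℝ} (ht : 1 ≤ t) :
    (1 + t ^ 2) ^ (a + 1) ≤ 2 * t ^ 2 * (1 + t ^ 2) ^ a := by
  rw [Real.rpow_add_one (by positivity), mul_comm]
  gcongr
  nlinarith

lemma one_add_sq_rpow_add_half_le {a t : ℝ} (ht : 1 ≤ t) :
    (1 + t ^ 2) ^ (a + 1 / 2) ≤ 2 * t * (1 + t ^ 2) ^ a := by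
  rw [Real.rpow_add (by positivity), ← Real.sqrt_eq_rpow, mul_comm]
  gcongr
  rw [Real.sqrt_le_left (by linarith)]
  nlinarith

lemma one_add_norm_add_sq_le {E : Type*} [SeminormedAddCommGroup E] {M : ℝ} {Q : E}
    (hQ : ‖Q‖ ≤ M) (h : E) : 1 + ‖Q + h‖ ^ 2 ≤ (M + 1) ^ 2 * (1 + ‖h‖ ^ 2) := by
  have hM : 0 ≤ M := (norm_nonneg Q).trans hQ
  have hQh : ‖Q + h‖ ≤ M + ‖h‖ := (norm_add_le Q h).trans (by linarith)
  nlinarith [norm_nonneg (Q + h), norm_nonneg h, sq_nonneg (‖h‖ - 1),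
    mul_nonneg hM (sq_nonneg ‖h‖)]

section Gradient

variable {𝕜 E : Type*} [RCLike 𝕜] [NormedAddCommGroup E] [InnerProductSpace 𝕜 E] [CompleteSpace E]

lemma norm_gradient (f : E → 𝕜) (x : E) : ‖gradient f x‖ = ‖fderiv 𝕜 f x‖ :=
  LinearIsometryEquiv.norm_map _ _

lemma norm_gradient_sub_gradient (f : E → 𝕜) (x y : E) :
    ‖gradient f x - gradient f y‖ = ‖fderiv 𝕜 f x - fderiv 𝕜 f y‖ := by
  rw [gradient, gradient, ← map_sub]
  exact LinearIsometryEquiv.norm_map _ _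

end Gradient

section NormedSpace

variable {E F : Type*} [NormedAddCommGroup E] [NormedSpace ℝ E]
  [NormedAddCommGroup F] [NormedSpace ℝ F]

theorem Convex.norm_image_sub_sub_fderiv_le_of_lipschitzOnWith {f : E → F} {s : Set E}
    {K : NNReal} (hs : Convex ℝ s) (hf : ∀ x ∈ s, DifferentiableAt ℝ f x)
    (hK : LipschitzOnWith K (fderiv ℝ f) s) {x y : E} (hx : x ∈ s) (hy : y ∈ s) :
    ‖f y - f x - fderiv ℝ f x (y - x)‖ ≤ K * ‖y - x‖ ^ 2 := by
  have hbound : ∀ z ∈ s ∩ closedBall x ‖y - x‖, ‖fderiv ℝ f z - fderiv ℝ f x‖ ≤ K * ‖y - x‖ :=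
    fun z hz ↦ (hK.norm_sub_le hz.1 hx).trans (by gcongr; exact mem_closedBall_iff_norm.1 hz.2)
  calc ‖f y - f x - fderiv ℝ f x (y - x)‖ ≤ K * ‖y - x‖ * ‖y - x‖ :=
        (hs.inter (convex_closedBall x _)).norm_image_sub_le_of_norm_fderiv_le'
          (fun z hz ↦ hf z hz.1) hbound
          ⟨hx, mem_closedBall_self (norm_nonneg _)⟩ ⟨hy, mem_closedBall_iff_norm.2 le_rfl⟩
    _ = K * ‖y - x‖ ^ 2 := by ring

theorem ContDiff.exists_taylor_remainder_le_of_norm_le_one [FiniteDimensional ℝ E] {f : E → F}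
    (hf : ContDiff ℝ 2 f) (M : ℝ) :
    ∃ K : ℝ, 0 ≤ K ∧ ∀ Q h : E, ‖Q‖ ≤ M → ‖h‖ ≤ 1 →
      ‖f (Q + h) - f Q - fderiv ℝ f Q h‖ ≤ K * ‖h‖ ^ 2 ∧
        ‖fderiv ℝ f (Q + h) - fderiv ℝ f Q‖ ≤ K * ‖h‖ := by
  obtain ⟨K, hK⟩ := (hf.fderiv_right le_rfl).contDiffOn.exists_lipschitzOnWith one_ne_zero
    (convex_closedBall (0 : E) (M + 1)) (isCompact_closedBall _ _)
  refine ⟨K, K.coe_nonneg, fun Q h hQ hh ↦ ?_⟩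
  have hQ' : Q ∈ closedBall (0 : E) (M + 1) := mem_closedBall_zero_iff.2 (by linarith)
  have hQh : Q + h ∈ closedBall (0 : E) (M + 1) :=
    mem_closedBall_zero_iff.2 ((norm_add_le _ _).trans (by linarith))
  constructor
  · simpa using
      (convex_closedBall (0 : E) (M + 1)).norm_image_sub_sub_fderiv_le_of_lipschitzOnWith
        (fun x _ ↦ hf.differentiable two_ne_zero x) hK hQ' hQh
  · simpa using hK.norm_sub_le hQh hQ'

theorem exists_taylor_remainder_le_of_one_le_norm {p L : ℝ} (hp : 1 ≤ p) (hL : 0 ≤ L)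
    {f : E → F} (hgrowth : ∀ x, ‖f x‖ ≤ L * (1 + ‖x‖ ^ p))
    (hgrad : ∀ x, ‖fderiv ℝ f x‖ ≤ L * (1 + ‖x‖ ^ 2) ^ ((p - 1) / 2)) (M : ℝ) :
    ∃ c : ℝ, ∀ Q h : E, ‖Q‖ ≤ M → 1 ≤ ‖h‖ →
      ‖f (Q + h) - f Q - fderiv ℝ f Q h‖ ≤ c * (1 + ‖h‖ ^ 2) ^ ((p - 2) / 2) * ‖h‖ ^ 2 ∧
        ‖fderiv ℝ f (Q + h) - fderiv ℝ f Q‖ ≤ c * (1 + ‖h‖ ^ 2) ^ ((p - 2) / 2) * ‖h‖ := by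
  set A := (M + 1) ^ 2
  refine ⟨8 * L * A ^ (p / 2) + 4 * L * A ^ ((p - 1) / 2), fun Q h hQ hh ↦ ?_⟩
  set t := ‖h‖
  set w := (1 + t ^ 2) ^ ((p - 2) / 2)
  have hA : 0 ≤ A := sq_nonneg _
  have hs : 0 ≤ 1 + t ^ 2 := by positivity
  have hQh : 1 + ‖Q + h‖ ^ 2 ≤ A * (1 + t ^ 2) := one_add_norm_add_sq_le hQ h
  have hQ' : 1 + ‖Q‖ ^ 2 ≤ A * (1 + t ^ 2) :=
    calc 1 + ‖Q‖ ^ 2 ≤ A * (1 + ‖(0 : E)‖ ^ 2) := by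
          simpa using one_add_norm_add_sq_le hQ (0 : E)
      _ ≤ A * (1 + t ^ 2) := by simp only [norm_zero]; nlinarith [sq_nonneg t]
  have hf_le (x : E) (hx : 1 + ‖x‖ ^ 2 ≤ A * (1 + t ^ 2)) :
      ‖f x‖ ≤ 4 * L * A ^ (p / 2) * w * t ^ 2 := by
    have hbracket : 1 + ‖x‖ ^ p ≤ 2 * (1 + ‖x‖ ^ 2) ^ (p / 2) :=
      one_add_rpow_le_two_mul_one_add_sq_rpow (norm_nonneg x) (by linarith)
    have hpow : (1 + t ^ 2) ^ (p / 2) ≤ 2 * t ^ 2 * w := by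
      rw [show p / 2 = (p - 2) / 2 + 1 by ring]; exact one_add_sq_rpow_add_one_le hh
    calc ‖f x‖ ≤ L * (2 * (1 + ‖x‖ ^ 2) ^ (p / 2)) := (hgrowth x).trans (by gcongr)
      _ ≤ L * (2 * (A * (1 + t ^ 2)) ^ (p / 2)) := by gcongr
      _ = 2 * L * A ^ (p / 2) * (1 + t ^ 2) ^ (p / 2) := by rw [Real.mul_rpow hA hs]; ring
      _ ≤ 2 * L * A ^ (p / 2) * (2 * t ^ 2 * w) := by gcongr
      _ = 4 * L * A ^ (p / 2) * w * t ^ 2 := by ring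
  have hfderiv_le (x : E) (hx : 1 + ‖x‖ ^ 2 ≤ A * (1 + t ^ 2)) :
      ‖fderiv ℝ f x‖ ≤ 2 * L * A ^ ((p - 1) / 2) * w * t := by
    have hpow : (1 + t ^ 2) ^ ((p - 1) / 2) ≤ 2 * t * w := by
      rw [show (p - 1) / 2 = (p - 2) / 2 + 1 / 2 by ring]; exact one_add_sq_rpow_add_half_le hh
    calc ‖fderiv ℝ f x‖ ≤ L * (A * (1 + t ^ 2)) ^ ((p - 1) / 2) :=
          (hgrad x).trans (by gcongr)
      _ = L * A ^ ((p - 1) / 2) * (1 + t ^ 2) ^ ((p - 1) / 2) := by rw [Real.mul_rpow hA hs]; ring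
      _ ≤ L * A ^ ((p - 1) / 2) * (2 * t * w) := by gcongr
      _ = 2 * L * A ^ ((p - 1) / 2) * w * t := by ring
  constructor
  · calc ‖f (Q + h) - f Q - fderiv ℝ f Q h‖ ≤ ‖f (Q + h)‖ + ‖f Q‖ + ‖fderiv ℝ f Q‖ * t :=
          (norm_sub_le _ _).trans (add_le_add (norm_sub_le _ _) ((fderiv ℝ f Q).le_opNorm h))
      _ ≤ 4 * L * A ^ (p / 2) * w * t ^ 2 + 4 * L * A ^ (p / 2) * w * t ^ 2 +
            2 * L * A ^ ((p - 1) / 2) * w * t * t := by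
          gcongr
          exacts [hf_le _ hQh, hf_le _ hQ', hfderiv_le _ hQ']
      _ ≤ (8 * L * A ^ (p / 2) + 4 * L * A ^ ((p - 1) / 2)) * w * t ^ 2 := by
          have : 0 ≤ L * A ^ ((p - 1) / 2) * w * t ^ 2 := by positivity
          nlinarith
  · calc ‖fderiv ℝ f (Q + h) - fderiv ℝ f Q‖ ≤ ‖fderiv ℝ f (Q + h)‖ + ‖fderiv ℝ f Q‖ :=
          norm_sub_le _ _
      _ ≤ 2 * L * A ^ ((p - 1) / 2) * w * t + 2 * L * A ^ ((p - 1) / 2) * w * t :=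
          add_le_add (hfderiv_le _ hQh) (hfderiv_le _ hQ')
      _ ≤ (8 * L * A ^ (p / 2) + 4 * L * A ^ ((p - 1) / 2)) * w * t := by
          have : 0 ≤ L * A ^ (p / 2) * w * t := by positivity
          nlinarith

theorem ContDiff.exists_taylor_remainder_le [FiniteDimensional ℝ E] {p L : ℝ} (hp : 1 ≤ p)
    (hL : 0 ≤ L) {f : E → F} (hf : ContDiff ℝ 2 f) (hgrowth : ∀ x, ‖f x‖ ≤ L * (1 + ‖x‖ ^ p))
    (hgrad : ∀ x, ‖fderiv ℝ f x‖ ≤ L * (1 + ‖x‖ ^ 2) ^ ((p - 1) / 2)) (M : ℝ) :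
    ∃ c : ℝ, 0 < c ∧ ∀ Q h : E, ‖Q‖ ≤ M →
      ‖f (Q + h) - f Q - fderiv ℝ f Q h‖ ≤ c * (1 + ‖h‖ ^ 2) ^ ((p - 2) / 2) * ‖h‖ ^ 2 ∧
        ‖fderiv ℝ f (Q + h) - fderiv ℝ f Q‖ ≤ c * (1 + ‖h‖ ^ 2) ^ ((p - 2) / 2) * ‖h‖ := by
  obtain ⟨K, hK, hnear⟩ := hf.exists_taylor_remainder_le_of_norm_le_one M
  obtain ⟨c, hfar⟩ := exists_taylor_remainder_le_of_one_le_norm hp hL hgrowth hgrad M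
  set m : ℝ := min 1 (2 ^ ((p - 2) / 2))
  have hm : 0 < m := lt_min one_pos (by positivity)
  refine ⟨max 1 (max (K / m) c), by positivity, fun Q h hQ ↦ ?_⟩
  set w := (1 + ‖h‖ ^ 2) ^ ((p - 2) / 2)
  rcases le_total ‖h‖ 1 with hh | hh
  · have hmw : m ≤ w :=
      min_one_two_rpow_le_rpow (by nlinarith [norm_nonneg h]) (by nlinarith [norm_nonneg h])
    have hK' (s : ℝ) (hs : 0 ≤ s) : K * s ≤ max 1 (max (K / m) c) * w * s := by
      calc K * s = K / m * m * s := by field_simp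
        _ ≤ max 1 (max (K / m) c) * w * s := by gcongr; exact le_max_of_le_right (le_max_left _ _)
    exact (hnear Q h hQ hh).imp (fun h₁ ↦ h₁.trans (hK' _ (by positivity)))
      (fun h₂ ↦ h₂.trans (hK' _ (norm_nonneg _)))
  · have hc : c ≤ max 1 (max (K / m) c) := le_max_of_le_right (le_max_right _ _)
    exact (hfar Q h hQ hh).imp (fun h₁ ↦ h₁.trans (by gcongr)) (fun h₂ ↦ h₂.trans (by gcongr))

end NormedSpace

theorem stmt_8_general (p L : ℝ) (hp : 1 < p) (hL : 0 < L) (k : ℕ)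
    (f : EuclideanSpace ℝ (Fin k) → ℝ) (hf : ContDiff ℝ 2 f)
    (hgrowth : ∀ ξ : EuclideanSpace ℝ (Fin k), |f ξ| ≤ L * (1 + ‖ξ‖ ^ p))
    (hgrad : ∀ ξ : EuclideanSpace ℝ (Fin k),
      ‖gradient f ξ‖ ≤ L * (1 + ‖ξ‖ ^ 2) ^ ((p - 1) / 2)) :
    ∀ M : ℝ, 0 < M → ∃ c : ℝ, 0 < c ∧
      ∀ Q : EuclideanSpace ℝ (Fin k), ‖Q‖ ≤ M →
        ∀ lam : ℝ, 0 < lam → ∀ ξ : EuclideanSpace ℝ (Fin k),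
          |(f (Q + lam • ξ) - f Q - (inner ℝ (gradient f Q) (lam • ξ) : ℝ)) / lam ^ 2| ≤
              c * (1 + ‖lam • ξ‖ ^ 2) ^ ((p - 2) / 2) * ‖ξ‖ ^ 2 ∧
            ‖lam⁻¹ • (gradient f (Q + lam • ξ) - gradient f Q)‖ ≤
              c * (1 + ‖lam • ξ‖ ^ 2) ^ ((p - 2) / 2) * ‖ξ‖ := by
  intro M _
  obtain ⟨c, hc, hbound⟩ := hf.exists_taylor_remainder_le hp.le hL.le hgrowth
    (fun ξ ↦ norm_gradient f ξ ▸ hgrad ξ) M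
  refine ⟨c, hc, fun Q hQ lam hlam ξ ↦ ?_⟩
  obtain ⟨hrem, hdiff⟩ := hbound Q (lam • ξ) hQ
  have hnorm : ‖lam • ξ‖ = lam * ‖ξ‖ := by rw [norm_smul, Real.norm_of_nonneg hlam.le]
  constructor
  · rw [inner_gradient_left, abs_div, abs_of_pos (pow_pos hlam 2), div_le_iff₀ (pow_pos hlam 2)]
    calc |f (Q + lam • ξ) - f Q - fderiv ℝ f Q (lam • ξ)|
        ≤ c * (1 + ‖lam • ξ‖ ^ 2) ^ ((p - 2) / 2) * ‖lam • ξ‖ ^ 2 := hrem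
      _ = c * (1 + ‖lam • ξ‖ ^ 2) ^ ((p - 2) / 2) * ‖ξ‖ ^ 2 * lam ^ 2 := by rw [hnorm]; ring
  · rw [norm_smul, Real.norm_of_nonneg (inv_nonneg.2 hlam.le), norm_gradient_sub_gradient]
    calc lam⁻¹ * ‖fderiv ℝ f (Q + lam • ξ) - fderiv ℝ f Q‖
        ≤ lam⁻¹ * (c * (1 + ‖lam • ξ‖ ^ 2) ^ ((p - 2) / 2) * ‖lam • ξ‖) := by gcongr
      _ = c * (1 + ‖lam • ξ‖ ^ 2) ^ ((p - 2) / 2) * ‖ξ‖ := by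
        rw [hnorm]; field_simp

theorem stmt_8 (p L : ℝ) (hp : 1 < p) (hL : 0 < L) (k : ℕ) (hk : 1 ≤ k)
    (f : EuclideanSpace ℝ (Fin k) → ℝ) (hf : ContDiff ℝ 2 f)
    (hgrowth : ∀ ξ : EuclideanSpace ℝ (Fin k), |f ξ| ≤ L * (1 + ‖ξ‖ ^ p))
    (hgrad : ∀ ξ : EuclideanSpace ℝ (Fin k),
      ‖gradient f ξ‖ ≤ L * (1 + ‖ξ‖ ^ 2) ^ ((p - 1) / 2)) :
    ∀ M : ℝ, 0 < M → ∃ c : ℝ, 0 < c ∧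
      ∀ Q : EuclideanSpace ℝ (Fin k), ‖Q‖ ≤ M →
        ∀ lam : ℝ, 0 < lam → ∀ ξ : EuclideanSpace ℝ (Fin k),
          |(f (Q + lam • ξ) - f Q - (inner ℝ (gradient f Q) (lam • ξ) : ℝ)) / lam ^ 2| ≤
              c * (1 + ‖lam • ξ‖ ^ 2) ^ ((p - 2) / 2) * ‖ξ‖ ^ 2 ∧
            ‖lam⁻¹ • (gradient f (Q + lam • ξ) - gradient f Q)‖ ≤
              c * (1 + ‖lam • ξ‖ ^ 2) ^ ((p - 2) / 2) * ‖ξ‖ :=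
  stmt_8_general p L hp hL k f hf hgrowth hgrad
end

section
/- Let 1 < p < 2 and m ≥ 1. There exists a constant c = c(p) > 0 such that for every λ > 0 and all a, b ∈ ℝ^m one has (1 + λ²|a|²)^{(p−2)/2} |a| |b| ≤ c(p) · λ^{−2} · ( |V(λa)|² + |V(λb)|² ). -/
lemma mono_aux (p μ s t : ℝ) (hp1 : 1 < p) (hp2 : p < 2) (hμ : 0 ≤ μ) (hs : 0 ≤ s)
    (hst : s ≤ t) :
    (1 + μ * s ^ 2) ^ ((p - 2) / 2) * s ≤ (1 + μ * t ^ 2) ^ ((p - 2) / 2) * t := by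
  have ht : 0 ≤ t := hs.trans hst
  have hA : (0:ℝ) < 1 + μ * s ^ 2 := by positivity
  have hB : (0:ℝ) < 1 + μ * t ^ 2 := by positivity
  set r : ℝ := (2 - p) / 2 with hr
  have hrpos : 0 < r := by simp [hr]; linarith
  have hq : (p - 2) / 2 = -r := by simp [hr]; ring
  rw [hq, Real.rpow_neg hA.le, Real.rpow_neg hB.le, inv_mul_eq_div, inv_mul_eq_div,
    div_le_div_iff₀ (Real.rpow_pos_of_pos hA _) (Real.rpow_pos_of_pos hB _)]
  -- goal: s * (1+μt²)^r ≤ t * (1+μs²)^r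
  rcases eq_or_lt_of_le hs with h0 | hs'
  · rw [← h0]
    have : (0:ℝ) ≤ t * (1 + μ * 0 ^ 2) ^ r := by positivity
    simpa using this
  have ht' : 0 < t := hs'.trans_le hst
  have key : ∀ u v : ℝ, 0 < u → 0 < v →
      u * (1 + μ * v ^ 2) ^ r = u ^ (1 - 2 * r) * (u ^ 2 * (1 + μ * v ^ 2)) ^ r := by
    intro u v hu hv
    have hBv : (0:ℝ) < 1 + μ * v ^ 2 := by positivity
    rw [Real.mul_rpow (sq_nonneg u) hBv.le]
    have h1 : ((u:ℝ) ^ 2) ^ r = u ^ (2 * r) := by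
      rw [← Real.rpow_natCast u 2, ← Real.rpow_mul hu.le]
      norm_num
    rw [h1, ← mul_assoc, ← Real.rpow_add hu]
    norm_num
  rw [key s t hs' ht', key t s ht' hs']
  have h1 : s ^ (1 - 2 * r) ≤ t ^ (1 - 2 * r) :=
    Real.rpow_le_rpow hs hst (by simp [hr]; linarith)
  have h2 : (s ^ 2 * (1 + μ * t ^ 2)) ^ r ≤ (t ^ 2 * (1 + μ * s ^ 2)) ^ r := by
    apply Real.rpow_le_rpow (by positivity) _ hrpos.le
    have hs2 : s ^ 2 ≤ t ^ 2 := by nlinarith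
    nlinarith
  have := mul_le_mul h1 h2 (by positivity) (by positivity)
  exact this

lemma aux (p μ s t : ℝ) (hp1 : 1 < p) (hp2 : p < 2) (hμ : 0 ≤ μ) (hs : 0 ≤ s) (ht : 0 ≤ t) :
    (1 + μ * s ^ 2) ^ ((p - 2) / 2) * s * t ≤
      (1 + μ * s ^ 2) ^ ((p - 2) / 2) * s ^ 2 + (1 + μ * t ^ 2) ^ ((p - 2) / 2) * t ^ 2 := by
  have hA : (0:ℝ) < 1 + μ * s ^ 2 := by positivity
  have hB : (0:ℝ) < 1 + μ * t ^ 2 := by positivity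
  rcases le_total t s with h | h
  · have h1 : (1 + μ * s ^ 2) ^ ((p - 2) / 2) * s * t ≤
        (1 + μ * s ^ 2) ^ ((p - 2) / 2) * s ^ 2 := by
      have := mul_le_mul_of_nonneg_left h (by positivity :
        (0:ℝ) ≤ (1 + μ * s ^ 2) ^ ((p - 2) / 2) * s)
      calc (1 + μ * s ^ 2) ^ ((p - 2) / 2) * s * t ≤
          (1 + μ * s ^ 2) ^ ((p - 2) / 2) * s * s := this
        _ = (1 + μ * s ^ 2) ^ ((p - 2) / 2) * s ^ 2 := by ring
    have h2 : (0:ℝ) ≤ (1 + μ * t ^ 2) ^ ((p - 2) / 2) * t ^ 2 := by positivity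
    linarith
  · have hmono := mono_aux p μ s t hp1 hp2 hμ hs h
    have h1 : (1 + μ * s ^ 2) ^ ((p - 2) / 2) * s * t ≤
        (1 + μ * t ^ 2) ^ ((p - 2) / 2) * t ^ 2 := by
      calc (1 + μ * s ^ 2) ^ ((p - 2) / 2) * s * t ≤
          (1 + μ * t ^ 2) ^ ((p - 2) / 2) * t * t := mul_le_mul_of_nonneg_right hmono ht
        _ = (1 + μ * t ^ 2) ^ ((p - 2) / 2) * t ^ 2 := by ring
    have h2 : (0:ℝ) ≤ (1 + μ * s ^ 2) ^ ((p - 2) / 2) * s ^ 2 := by positivity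
    linarith

lemma normV_sq {E : Type*} [NormedAddCommGroup E] [NormedSpace ℝ E] (p : ℝ) (ξ : E) :
    ‖V p ξ‖ ^ 2 = (1 + ‖ξ‖ ^ 2) ^ ((p - 2) / 2) * ‖ξ‖ ^ 2 := by
  have hpos : (0:ℝ) < 1 + ‖ξ‖ ^ 2 := by positivity
  rw [V, norm_smul, Real.norm_eq_abs, abs_of_pos (Real.rpow_pos_of_pos hpos _), mul_pow]
  congr 1
  rw [← Real.rpow_natCast ((1 + ‖ξ‖ ^ 2) ^ ((p - 2) / 4)) 2, ← Real.rpow_mul hpos.le]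
  norm_num
  ring_nf

theorem stmt_11 (p : ℝ) (hp1 : 1 < p) (hp2 : p < 2) (m : ℕ) (hm : 1 ≤ m) :
    ∃ c : ℝ, 0 < c ∧ ∀ lam : ℝ, 0 < lam → ∀ a b : EuclideanSpace ℝ (Fin m),
      (1 + lam ^ 2 * ‖a‖ ^ 2) ^ ((p - 2) / 2) * ‖a‖ * ‖b‖ ≤
        c / lam ^ 2 * (‖V p (lam • a)‖ ^ 2 + ‖V p (lam • b)‖ ^ 2) := by
  refine ⟨1, one_pos, fun lam hlam a b => ?_⟩
  have hna : ‖lam • a‖ ^ 2 = lam ^ 2 * ‖a‖ ^ 2 := by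
    rw [norm_smul, Real.norm_eq_abs, mul_pow, sq_abs]
  have hnb : ‖lam • b‖ ^ 2 = lam ^ 2 * ‖b‖ ^ 2 := by
    rw [norm_smul, Real.norm_eq_abs, mul_pow, sq_abs]
  rw [normV_sq, normV_sq, hna, hnb]
  have hlam2 : (lam:ℝ) ^ 2 ≠ 0 := by positivity
  have hrw : (1:ℝ) / lam ^ 2 *
      ((1 + lam ^ 2 * ‖a‖ ^ 2) ^ ((p - 2) / 2) * (lam ^ 2 * ‖a‖ ^ 2) +
       (1 + lam ^ 2 * ‖b‖ ^ 2) ^ ((p - 2) / 2) * (lam ^ 2 * ‖b‖ ^ 2)) =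
      (1 + lam ^ 2 * ‖a‖ ^ 2) ^ ((p - 2) / 2) * ‖a‖ ^ 2 +
      (1 + lam ^ 2 * ‖b‖ ^ 2) ^ ((p - 2) / 2) * ‖b‖ ^ 2 := by
    field_simp
  rw [hrw]
  exact aux p (lam ^ 2) ‖a‖ ‖b‖ hp1 hp2 (by positivity) (norm_nonneg a) (norm_nonneg b)
end

section
/- Let 1 < p < 2 and m ≥ 1. For every ε > 0 there exists a constant C = C(p, ε) > 0 such that for all a, b ∈ ℝ^m one has (1 + |a + b|²)^{p/2} ≤ C(p, ε) · (1 + |a|²)^{p/2} + (1 + ε) |b|^p. -/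
/-! The Japanese bracket `√(1 + ‖a‖²)` satisfies `√(1 + ‖a + b‖²) ≤ √(1 + ‖a‖²) + ‖b‖`, so it suffices
to bound `(s + t) ^ p` for `s, t ≥ 0`. Writing `s + t = θ (s / θ) + (1 - θ) (t / (1 - θ))`, convexity
of `x ↦ x ^ p` gives `(s + t) ^ p ≤ θ ^ (1 - p) s ^ p + (1 - θ) ^ (1 - p) t ^ p`, and since `p > 1`
the weight `θ ∈ (0, 1)` can be chosen with `(1 - θ) ^ (1 - p) = 1 + ε`. -/

open Real

namespace Real

theorem add_rpow_le_weighted_rpow_add_rpow {p : ℝ} (hp : 1 ≤ p) {θ : ℝ} (hθ0 : 0 < θ)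
    (hθ1 : θ < 1) {s t : ℝ} (hs : 0 ≤ s) (ht : 0 ≤ t) :
    (s + t) ^ p ≤ θ ^ (1 - p) * s ^ p + (1 - θ) ^ (1 - p) * t ^ p := by
  have h1θ : 0 < 1 - θ := by linarith
  have hconv := (convexOn_rpow hp).2 (x := s / θ) (y := t / (1 - θ))
    (Set.mem_Ici.2 (by positivity)) (Set.mem_Ici.2 (by positivity)) hθ0.le h1θ.le (by ring)
  have hweight {w x : ℝ} (hw : 0 < w) (hx : 0 ≤ x) : w * (x / w) ^ p = w ^ (1 - p) * x ^ p := by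
    rw [div_rpow hx hw.le, rpow_sub hw, rpow_one]
    field_simp
  simp only [smul_eq_mul, mul_div_cancel₀ _ hθ0.ne', mul_div_cancel₀ _ h1θ.ne'] at hconv
  rwa [hweight hθ0 hs, hweight h1θ ht] at hconv

theorem exists_add_rpow_le_mul_rpow_add_mul_rpow {p : ℝ} (hp : 1 < p) {ε : ℝ} (hε : 0 < ε) :
    ∃ C : ℝ, 0 < C ∧ ∀ s t : ℝ, 0 ≤ s → 0 ≤ t → (s + t) ^ p ≤ C * s ^ p + (1 + ε) * t ^ p := by
  have hε1 : 1 < 1 + ε := by linarith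
  have hp1 : 0 < p - 1 := by linarith
  set r : ℝ := (1 + ε) ^ (-(p - 1)⁻¹)
  have hr0 : 0 < r := rpow_pos_of_pos (by linarith) _
  have hr1 : r < 1 := rpow_lt_one_of_one_lt_of_neg hε1 (neg_neg_of_pos (inv_pos.2 hp1))
  have hrp : r ^ (1 - p) = 1 + ε := by
    rw [← rpow_mul (by linarith), show -(p - 1)⁻¹ * (1 - p) = 1 by field_simp; ring, rpow_one]
  refine ⟨(1 - r) ^ (1 - p), rpow_pos_of_pos (by linarith) _, fun s t hs ht => ?_⟩
  have h := add_rpow_le_weighted_rpow_add_rpow hp.le (θ := 1 - r) (by linarith) (by linarith) hs ht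
  rwa [sub_sub_cancel, hrp] at h

end Real

theorem sqrt_one_add_sq_norm_add_le {E : Type*} [SeminormedAddGroup E] (a b : E) :
    √(1 + ‖a + b‖ ^ 2) ≤ √(1 + ‖a‖ ^ 2) + ‖b‖ := by
  have ha : ‖a‖ ≤ √(1 + ‖a‖ ^ 2) := le_sqrt_of_sq_le (by linarith)
  have hab : ‖a + b‖ ≤ ‖a‖ + ‖b‖ := norm_add_le a b
  have hsq : √(1 + ‖a‖ ^ 2) ^ 2 = 1 + ‖a‖ ^ 2 := sq_sqrt (by positivity)
  apply sqrt_le_iff.2 ⟨by positivity, ?_⟩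
  nlinarith [norm_nonneg a, norm_nonneg b, norm_nonneg (a + b)]

theorem stmt_15_general (p : ℝ) (hp1 : 1 < p) (m : ℕ)
    (ε : ℝ) (hε : 0 < ε) :
    ∃ C : ℝ, 0 < C ∧ ∀ a b : EuclideanSpace ℝ (Fin m),
      (1 + ‖a + b‖ ^ 2) ^ (p / 2) ≤ C * (1 + ‖a‖ ^ 2) ^ (p / 2) + (1 + ε) * ‖b‖ ^ p := by
  obtain ⟨C, hC, hbound⟩ := exists_add_rpow_le_mul_rpow_add_mul_rpow hp1 hε
  refine ⟨C, hC, fun a b => ?_⟩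
  rw [rpow_div_two_eq_sqrt p (by positivity), rpow_div_two_eq_sqrt p (by positivity)]
  calc √(1 + ‖a + b‖ ^ 2) ^ p ≤ (√(1 + ‖a‖ ^ 2) + ‖b‖) ^ p :=
        rpow_le_rpow (sqrt_nonneg _) (sqrt_one_add_sq_norm_add_le a b) (by linarith)
    _ ≤ C * √(1 + ‖a‖ ^ 2) ^ p + (1 + ε) * ‖b‖ ^ p :=
        hbound _ _ (sqrt_nonneg _) (norm_nonneg b)

theorem stmt_15 (p : ℝ) (hp1 : 1 < p) (hp2 : p < 2) (m : ℕ) (hm : 1 ≤ m)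
    (ε : ℝ) (hε : 0 < ε) :
    ∃ C : ℝ, 0 < C ∧ ∀ a b : EuclideanSpace ℝ (Fin m),
      (1 + ‖a + b‖ ^ 2) ^ (p / 2) ≤ C * (1 + ‖a‖ ^ 2) ^ (p / 2) + (1 + ε) * ‖b‖ ^ p :=
  stmt_15_general p hp1 m ε hε
end
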